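/- For every integer m ≥ 2 and every polynomial x ∈ R, one has Q_m(x) = w₂^(2^(m-1)) · Q_{m-1}(x) + w₃^(2^(m-1)) · Q_{m-2}(x). (Equivalently, Q_m x + w₂^(2^(m-1)) Q_{m-1} x + w₃^(2^(m-1)) Q_{m-2} x = 0 in characteristic 2.) -/

import Mathlib

open MvPolynomial

/-- `R = ℤ/2[s₁, s₂]`, the mod 2 cohomology of `B(ℤ/2)²`. -/
noncomputable abbrev R : Type := MvPolynomial (Fin 2) (ZMod 2)

/-- The `m`-th Milnor operation `Q_m`, the derivation with `Q_m(sᵢ) = sᵢ^(2^(m+1))`. -/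
noncomputable def Q (m : ℕ) : Derivation (ZMod 2) R R :=
  MvPolynomial.mkDerivation (ZMod 2) (fun i : Fin 2 => (X i : R) ^ 2 ^ (m + 1))

/-- `w₂ = s₁² + s₁s₂ + s₂²`. -/
noncomputable def w₂ : R := X 0 ^ 2 + X 0 * X 1 + X 1 ^ 2

/-- `w₃ = s₁²s₂ + s₁s₂²`. -/
noncomputable def w₃ : R := X 0 ^ 2 * X 1 + X 0 * X 1 ^ 2

/-!
Over `𝔽₂` the polynomial `t⁴ + w₂ t² + w₃ t` is the product of `t + v` over the four linear forms
`v ∈ {0, s₁, s₂, s₁ + s₂}`, so `sᵢ⁴ = w₂ sᵢ² + w₃ sᵢ`. Raising this to the `2^(m-1)`-th power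
(additive in characteristic 2) gives `Q_m sᵢ = w₂^(2^(m-1)) Q_{m-1} sᵢ + w₃^(2^(m-1)) Q_{m-2} sᵢ`,
and two derivations agreeing on the generators agree everywhere.
-/

theorem pow_four_eq_of_charTwo {A : Type*} [CommRing A] [CharP A 2] (a b : A) :
    a ^ 4 = (a ^ 2 + a * b + b ^ 2) * a ^ 2 + (a ^ 2 * b + a * b ^ 2) * a := by
  linear_combination (-(a ^ 3 * b) - a ^ 2 * b ^ 2) * CharTwo.two_eq_zero (R := A)

theorem X_pow_four (i : Fin 2) : (X i : R) ^ 4 = w₂ * X i ^ 2 + w₃ * X i := by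
  rw [w₂, w₃]
  match i with
  | 0 => exact pow_four_eq_of_charTwo _ _
  | 1 => linear_combination pow_four_eq_of_charTwo (X 1 : R) (X 0)

theorem pow_two_pow_add_two_of_pow_four {A : Type*} [CommRing A] [CharP A 2] {a p q : A}
    (h : a ^ 4 = p * a ^ 2 + q * a) (k : ℕ) :
    a ^ 2 ^ (k + 2) = p ^ 2 ^ k * a ^ 2 ^ (k + 1) + q ^ 2 ^ k * a ^ 2 ^ k := by
  calc a ^ 2 ^ (k + 2) = (a ^ 4) ^ 2 ^ k := by rw [← pow_mul]; ring
    _ = (p * a ^ 2) ^ 2 ^ k + (q * a) ^ 2 ^ k := by rw [h, add_pow_char_pow]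
    _ = p ^ 2 ^ k * a ^ 2 ^ (k + 1) + q ^ 2 ^ k * a ^ 2 ^ k := by
      rw [mul_pow, mul_pow, ← pow_mul, pow_succ' 2 k]

theorem Q_add_two (k : ℕ) : Q (k + 2) = w₂ ^ 2 ^ (k + 1) • Q (k + 1) + w₃ ^ 2 ^ (k + 1) • Q k := by
  refine derivation_ext fun i => ?_
  simp only [Q, mkDerivation_X, Derivation.add_apply, Derivation.smul_apply, smul_eq_mul]
  exact pow_two_pow_add_two_of_pow_four (X_pow_four i) (k + 1)

theorem stmt_0 (m : ℕ) (hm : 2 ≤ m) (x : R) :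
    Q m x = w₂ ^ 2 ^ (m - 1) * Q (m - 1) x + w₃ ^ 2 ^ (m - 1) * Q (m - 2) x := by
  obtain ⟨k, rfl⟩ := Nat.exists_eq_add_of_le' hm
  rw [Q_add_two]
  rfl
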